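/- In the fully truncated hypercube TC_n, distances from a fixed vertex to other vertices take only values of the form √(4k+2) (to vertices whose zero coordinate is in a different position) and √(4l) (to vertices with the zero coordinate in the same position), and these two sets of values are disjoint: √(4k+2) ≠ √(4l) for all natural numbers k, l. -/
import Mathlib


/-- The vertex set of the fully truncated hypercube `TCₙ`: points of `ℝⁿ` with exactly one
coordinate equal to `0` and all other coordinates equal to `±1`. -/
def TCset (n : ℕ) : Set (EuclideanSpace ℝ (Fin n)) :=
  {p | ∃ i₀ : Fin n, p i₀ = 0 ∧ ∀ i : Fin n, i ≠ i₀ → p i = 1 ∨ p i = -1}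

lemma sum_four_aux {n : ℕ} (s : Finset (Fin n)) (f : Fin n → ℝ)
    (h : ∀ i ∈ s, f i = 0 ∨ f i = 4) : ∃ m : ℕ, ∑ i ∈ s, f i = 4 * m := by
  induction s using Finset.induction_on with
  | empty => exact ⟨0, by simp⟩
  | @insert a s ha ih =>
    obtain ⟨m, hm⟩ := ih (fun i hi => h i (Finset.mem_insert_of_mem hi))
    rcases h _ (Finset.mem_insert_self _ _) with h0 | h4
    · exact ⟨m, by rw [Finset.sum_insert ha, h0, hm]; ring⟩
    · exact ⟨m + 1, by rw [Finset.sum_insert ha, h4, hm]; push_cast; ring⟩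

/-- in `TCₙ`, the distance from a vertex `A₀` (with zero coordinate at `j₀`)
to a vertex `A` (with zero coordinate at `j`) is of the form `√(4k+2)` if `j ≠ j₀`,
and of the form `√(4l)` if `j = j₀`; moreover `√(4k+2) ≠ √(4l)` for all naturals `k, l`. -/
theorem stmt_6 (n : ℕ) (A₀ A : EuclideanSpace ℝ (Fin n))
    (hA₀ : A₀ ∈ TCset n) (hA : A ∈ TCset n)
    (j₀ j : Fin n) (hj₀ : A₀ j₀ = 0) (hj : A j = 0) :
    ((j ≠ j₀ → ∃ k : ℕ, dist A₀ A = Real.sqrt (4 * (k : ℝ) + 2)) ∧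
     (j = j₀ → ∃ l : ℕ, dist A₀ A = Real.sqrt (4 * (l : ℝ)))) ∧
    ∀ k l : ℕ, Real.sqrt (4 * (k : ℝ) + 2) ≠ Real.sqrt (4 * (l : ℝ)) := by
  obtain ⟨i₀, hi₀, hA₀'⟩ := hA₀
  obtain ⟨i₁, hi₁, hA'⟩ := hA
  have hi₀j₀ : i₀ = j₀ := by
    by_contra hne
    rcases hA₀' j₀ (fun h => hne h.symm) with h | h <;> rw [hj₀] at h <;> norm_num at h
  have hi₁j : i₁ = j := by
    by_contra hne
    rcases hA' j (fun h => hne h.symm) with h | h <;> rw [hj] at h <;> norm_num at h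
  rw [hi₀j₀] at hA₀'
  rw [hi₁j] at hA'
  set f : Fin n → ℝ := fun i => (A₀ i - A i) ^ 2 with hf
  have hdist : dist A₀ A = Real.sqrt (∑ i, f i) := by
    rw [EuclideanSpace.dist_eq]
    congr 1
    exact Finset.sum_congr rfl fun i _ => by rw [Real.dist_eq, sq_abs]
  have hf04 : ∀ i, i ≠ j₀ → i ≠ j → f i = 0 ∨ f i = 4 := by
    intro i h1 h2
    rcases hA₀' i h1 with ha | ha <;> rcases hA' i h2 with hb | hb <;>
      simp [hf, ha, hb] <;> norm_num
  refine ⟨⟨?_, ?_⟩, ?_⟩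
  · intro hjj
    have hj' : j ∈ Finset.univ.erase j₀ := Finset.mem_erase.2 ⟨hjj, Finset.mem_univ j⟩
    obtain ⟨m, hm⟩ := sum_four_aux ((Finset.univ.erase j₀).erase j) f (by
      intro i hi
      simp only [Finset.mem_erase] at hi
      exact hf04 i hi.2.1 hi.1)
    refine ⟨m, ?_⟩
    rw [hdist]
    congr 1
    rw [← Finset.add_sum_erase _ f (Finset.mem_univ j₀),
        ← Finset.add_sum_erase _ f hj', hm]
    have h1 : f j₀ = 1 := by
      rcases hA' j₀ (fun h => hjj h.symm) with hb | hb <;> simp [hf, hj₀, hb]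
    have h2 : f j = 1 := by
      rcases hA₀' j hjj with ha | ha <;> simp [hf, hj, ha]
    rw [h1, h2]; ring
  · intro hjj
    subst hjj
    obtain ⟨m, hm⟩ := sum_four_aux (Finset.univ.erase j) f (by
      intro i hi
      simp only [Finset.mem_erase] at hi
      exact hf04 i hi.1 hi.1)
    refine ⟨m, ?_⟩
    rw [hdist]
    congr 1
    rw [← Finset.add_sum_erase _ f (Finset.mem_univ j), hm]
    have h0 : f j = 0 := by simp [hf, hj₀, hj]
    rw [h0]; ring
  · intro k l h
    have hk : (0 : ℝ) ≤ 4 * k + 2 := by positivity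
    have hl : (0 : ℝ) ≤ 4 * l := by positivity
    have h' : (4 * (k : ℝ) + 2) = 4 * l := (Real.sqrt_inj hk hl).1 h
    have : 4 * k + 2 = 4 * l := by exact_mod_cast h'
    omega
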